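/- For A ∈ GL₂(ℝ) and ω ∈ ℝ² \ {0}, v_{ω,A} = det(A)·‖ω‖² / ‖ω·A‖². -/

import Mathlib

noncomputable def gammaM (ω : Fin 2 → ℝ) : Matrix (Fin 2) (Fin 2) ℝ :=
  ((ω 0 ^ 2 + ω 1 ^ 2)⁻¹ : ℝ) • !![ω 0, -ω 1; ω 1, ω 0]

noncomputable def vVal (ω : Fin 2 → ℝ) (A : Matrix (Fin 2) (Fin 2) ℝ) : ℝ :=
  ((gammaM ω)⁻¹ * A * gammaM (Matrix.vecMul ω A)) 1 1

lemma sq_ne (ω : Fin 2 → ℝ) (hω : ω ≠ 0) : ω 0 ^ 2 + ω 1 ^ 2 ≠ 0 := by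
  intro h
  have h0 : ω 0 = 0 := by nlinarith [sq_nonneg (ω 0), sq_nonneg (ω 1)]
  have h1 : ω 1 = 0 := by nlinarith [sq_nonneg (ω 0), sq_nonneg (ω 1)]
  apply hω; funext i; fin_cases i <;> assumption

lemma gamma_inv (ω : Fin 2 → ℝ) (hω : ω ≠ 0) :
    (gammaM ω)⁻¹ = !![ω 0, ω 1; -ω 1, ω 0] := by
  have h := sq_ne ω hω
  apply Matrix.inv_eq_left_inv
  show !![ω 0, ω 1; -ω 1, ω 0] * gammaM ω = 1
  simp only [gammaM, Matrix.mul_smul]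
  ext i j
  fin_cases i <;> fin_cases j
  all_goals simp [Matrix.mul_apply, Fin.sum_univ_succ, Matrix.one_apply]
  all_goals first | (right; ring) | (field_simp; done) | (field_simp; ring)

/-- v_{ω,A} = det(A)·‖ω‖²/‖ω·A‖². -/
theorem stmt_10 (A : Matrix (Fin 2) (Fin 2) ℝ) (hA : A.det ≠ 0)
    (ω : Fin 2 → ℝ) (hω : ω ≠ 0) :
    vVal ω A = A.det * (ω 0 ^ 2 + ω 1 ^ 2) /
      ((Matrix.vecMul ω A) 0 ^ 2 + (Matrix.vecMul ω A) 1 ^ 2) := by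
  have h := sq_ne ω hω
  have hU : IsUnit A.det := isUnit_iff_ne_zero.mpr hA
  have hωA : Matrix.vecMul ω A ≠ 0 := by
    intro hz
    apply hω
    have : Matrix.vecMul (Matrix.vecMul ω A) A⁻¹ = ω := by
      rw [Matrix.vecMul_vecMul, Matrix.mul_nonsing_inv A hU, Matrix.vecMul_one]
    rw [hz, Matrix.zero_vecMul] at this
    exact this.symm
  have h2 := sq_ne _ hωA
  rw [vVal, gamma_inv ω hω]
  simp only [gammaM, Matrix.det_fin_two]
  simp [Matrix.mul_apply, Matrix.vecMul, dotProduct, Fin.sum_univ_succ]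
  field_simp
  ring
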